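/- arXiv:2507.05525 — 3 statements merged into one kernel-verified Lean document; each statement's English description precedes it below -/
import Mathlib

section
/- Let g : (0,∞) → ℂ be measurable with ∫₀^∞ e^{−t} |g(t)|² dt < ∞, and define its Fourier–Laguerre coefficients gₙ := ∫₀^∞ g(t) Lₙ(t) e^{−t} dt for n ∈ ℕ. Then for every ρ ∈ ℂ with Im ρ > 0, setting z = (1/2 + iρ)/(1/2 − iρ) (so |z| < 1), the integral ∫₀^∞ g(t) e^{(iρ − 1/2)t} dt converges absolutely, the series ∑_{n=0}^∞ (−1)ⁿ zⁿ gₙ converges absolutely, and ∫₀^∞ g(t) e^{(iρ − 1/2)t} dt = (z + 1) ∑_{n=0}^∞ (−1)ⁿ zⁿ gₙ. -/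
open MeasureTheory Finset

/-- The Laguerre polynomial of order `n`: `Lₙ(t) = ∑_{k=0}^{n} (-1)^k (n choose k) t^k / k!`. -/
noncomputable def laguerre (n : ℕ) (t : ℝ) : ℝ :=
  ∑ k ∈ Finset.range (n + 1), (-1 : ℝ) ^ k * (n.choose k : ℝ) * t ^ k / (Nat.factorial k : ℝ)

lemma alt_sum_choose_choose (n m : ℕ) :
    ∑ k ∈ range (n + 1), (-1 : ℤ) ^ k * (n.choose k : ℤ) * (k.choose m : ℤ)
      = if n = m then (-1 : ℤ) ^ n else 0 := by
  rcases le_or_gt m n with h | h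
  · have hzero : ∀ k ∈ range (n + 1), k ∉ Ico m (n + 1) →
        (-1 : ℤ) ^ k * (n.choose k : ℤ) * (k.choose m : ℤ) = 0 := by
      intro k hkmem hk
      rw [mem_range] at hkmem
      rw [mem_Ico] at hk
      push_neg at hk
      have hlt : k < m := by
        by_contra hcon
        exact absurd (hk (by omega)) (by omega)
      simp [Nat.choose_eq_zero_of_lt hlt]
    have hsub : Ico m (n + 1) ⊆ range (n + 1) := by
      intro k hk; rw [mem_Ico] at hk; rw [mem_range]; omega
    rw [← Finset.sum_subset hsub (fun k hk1 hk2 => hzero k hk1 hk2)]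
    rw [Finset.sum_Ico_eq_sum_range]
    have hrw : ∀ j ∈ range (n + 1 - m),
        (-1 : ℤ) ^ (m + j) * (n.choose (m + j) : ℤ) * ((m + j).choose m : ℤ)
        = ((-1 : ℤ) ^ m * (n.choose m : ℤ)) * ((-1 : ℤ) ^ j * ((n - m).choose j : ℤ)) := by
      intro j hj
      rw [mem_range] at hj
      have h1 : n.choose (m + j) * (m + j).choose m = n.choose m * (n - m).choose (m + j - m) :=
        Nat.choose_mul (by omega)
      have h2 : m + j - m = j := by omega
      rw [h2] at h1
      have := congrArg (fun x : ℕ => (x : ℤ)) h1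
      push_cast at this ⊢
      rw [pow_add]
      linear_combination ((-1 : ℤ) ^ m * (-1 : ℤ) ^ j) * this
    rw [Finset.sum_congr rfl hrw, ← Finset.mul_sum]
    have h3 : n + 1 - m = (n - m) + 1 := by omega
    rw [h3, Int.alternating_sum_range_choose]
    rcases eq_or_ne n m with rfl | hne
    · simp
    · have : n - m ≠ 0 := by omega
      simp [this, hne]
  · rw [if_neg (by omega)]
    apply Finset.sum_eq_zero
    intro k hk
    rw [mem_range] at hk
    have : k < m := by omega
    simp [Nat.choose_eq_zero_of_lt this]

lemma alt_sum_choose_add (m k : ℕ) :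
    ∑ l ∈ range (m + 1), (-1 : ℤ) ^ l * (m.choose l : ℤ) * ((k + l).choose k : ℤ)
      = (-1 : ℤ) ^ m * (k.choose m : ℤ) := by
  have hvdm : ∀ l, ((k + l).choose k : ℤ)
      = ∑ i ∈ range (k + 1), (k.choose i : ℤ) * (l.choose (k - i) : ℤ) := by
    intro l
    have := Nat.add_choose_eq k l k
    rw [Finset.Nat.sum_antidiagonal_eq_sum_range_succ_mk] at this
    exact_mod_cast congrArg (fun x : ℕ => (x : ℤ)) this
  calc ∑ l ∈ range (m + 1), (-1 : ℤ) ^ l * (m.choose l : ℤ) * ((k + l).choose k : ℤ)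
      = ∑ i ∈ range (k + 1), (k.choose i : ℤ) *
          (∑ l ∈ range (m + 1), (-1 : ℤ) ^ l * (m.choose l : ℤ) * (l.choose (k - i) : ℤ)) := by
        rw [Finset.sum_congr rfl (fun l _ => by rw [hvdm l, Finset.mul_sum] :
          ∀ l ∈ range (m + 1), (-1 : ℤ) ^ l * (m.choose l : ℤ) * ((k + l).choose k : ℤ)
            = ∑ i ∈ range (k + 1),
              (-1 : ℤ) ^ l * (m.choose l : ℤ) * ((k.choose i : ℤ) * (l.choose (k - i) : ℤ)))]
        rw [Finset.sum_comm]
        apply Finset.sum_congr rfl; intro i _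
        rw [Finset.mul_sum]
        apply Finset.sum_congr rfl; intro l _
        ring
    _ = ∑ i ∈ range (k + 1), (k.choose i : ℤ) *
          (if m = k - i then (-1 : ℤ) ^ m else 0) := by
        simp_rw [alt_sum_choose_choose]
    _ = (-1 : ℤ) ^ m * (k.choose m : ℤ) := by
        rcases le_or_gt m k with h | h
        · rw [Finset.sum_eq_single (k - m)]
          · have hmk : m = k - (k - m) := by omega
            rw [if_pos hmk, Nat.choose_symm h]
            ring
          · intro i hi hne
            rw [mem_range] at hi
            have : m ≠ k - i := by omega
            simp [this]
          · intro hmem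
            exact absurd (mem_range.mpr (by omega)) hmem
        · have h0 : (k.choose m : ℤ) = 0 := by
            simp [Nat.choose_eq_zero_of_lt h]
          rw [h0, mul_zero]
          apply Finset.sum_eq_zero
          intro i hi
          rw [mem_range] at hi
          have : m ≠ k - i := by omega
          simp [this]

lemma laguerre_norm_sum (n : ℕ) :
    ∑ k ∈ range (n + 1), ∑ l ∈ range (n + 1),
      (-1 : ℤ) ^ (k + l) * (n.choose k : ℤ) * (n.choose l : ℤ) * ((k + l).choose k : ℤ)
      = 1 := by
  have hinner : ∀ k, ∑ l ∈ range (n + 1),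
      (-1 : ℤ) ^ (k + l) * (n.choose k : ℤ) * (n.choose l : ℤ) * ((k + l).choose k : ℤ)
      = (-1 : ℤ) ^ k * (n.choose k : ℤ) * ((-1 : ℤ) ^ n * (k.choose n : ℤ)) := by
    intro k
    rw [← alt_sum_choose_add n k, Finset.mul_sum]
    apply Finset.sum_congr rfl; intro l _
    rw [pow_add]; ring
  rw [Finset.sum_congr rfl (fun k _ => hinner k)]
  rw [Finset.sum_eq_single n]
  · have h2 : ((-1 : ℤ) ^ n) * ((-1 : ℤ) ^ n) = 1 := by
      rw [← pow_add, Even.neg_one_pow ⟨n, rfl⟩]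
    simp only [Nat.choose_self, Nat.cast_one, mul_one]
    exact h2
  · intro k hk hne
    rw [mem_range] at hk
    have : k < n := by omega
    simp [Nat.choose_eq_zero_of_lt this]
  · intro h; exact absurd (mem_range.mpr (by omega)) h

lemma aux_congr (j : ℕ) : ∀ t ∈ Set.Ioi (0 : ℝ),
    Real.exp (-t) * t ^ ((j : ℝ) + 1 - 1) = t ^ j * Real.exp (-t) := by
  intro t ht
  have h1 : ((j : ℝ) + 1) - 1 = (j : ℝ) := by ring
  rw [h1, Real.rpow_natCast]
  ring

lemma integrableOn_pow_exp (j : ℕ) :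
    IntegrableOn (fun t : ℝ => t ^ j * Real.exp (-t)) (Set.Ioi 0) := by
  have h := Real.GammaIntegral_convergent (s := j + 1) (by positivity)
  exact h.congr_fun (aux_congr j) measurableSet_Ioi

lemma integral_pow_exp (j : ℕ) :
    ∫ t in Set.Ioi (0 : ℝ), t ^ j * Real.exp (-t) = (j.factorial : ℝ) := by
  have h := Real.Gamma_eq_integral (s := j + 1) (by positivity)
  rw [Real.Gamma_nat_eq_factorial] at h
  rw [h]
  exact (setIntegral_congr_fun measurableSet_Ioi (aux_congr j)).symm

noncomputable def lcoef (n k : ℕ) : ℝ := (-1 : ℝ) ^ k * (n.choose k : ℝ) / (k.factorial : ℝ)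

lemma laguerre_eq (n : ℕ) (t : ℝ) :
    laguerre n t = ∑ k ∈ range (n + 1), lcoef n k * t ^ k := by
  unfold laguerre lcoef
  apply Finset.sum_congr rfl
  intro k _
  ring

lemma laguerre_sq_expand (n : ℕ) (t : ℝ) :
    laguerre n t ^ 2 * Real.exp (-t)
      = ∑ k ∈ range (n + 1), ∑ l ∈ range (n + 1),
          lcoef n k * lcoef n l * (t ^ (k + l) * Real.exp (-t)) := by
  rw [laguerre_eq, sq, Finset.sum_mul_sum]
  rw [Finset.sum_mul]
  apply Finset.sum_congr rfl; intro k _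
  rw [Finset.sum_mul]
  apply Finset.sum_congr rfl; intro l _
  rw [pow_add]; ring

lemma laguerre_sq_integrableOn (n : ℕ) :
    IntegrableOn (fun t : ℝ => laguerre n t ^ 2 * Real.exp (-t)) (Set.Ioi 0) := by
  have : IntegrableOn (fun t : ℝ => ∑ k ∈ range (n + 1), ∑ l ∈ range (n + 1),
      lcoef n k * lcoef n l * (t ^ (k + l) * Real.exp (-t))) (Set.Ioi 0) := by
    apply MeasureTheory.integrable_finset_sum
    intro k _
    apply MeasureTheory.integrable_finset_sum
    intro l _
    exact (integrableOn_pow_exp (k + l)).const_mul _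
  exact this.congr_fun (fun t _ => (laguerre_sq_expand n t).symm) measurableSet_Ioi

lemma integral_laguerre_sq (n : ℕ) :
    ∫ t in Set.Ioi (0 : ℝ), laguerre n t ^ 2 * Real.exp (-t) = 1 := by
  rw [setIntegral_congr_fun measurableSet_Ioi (fun t _ => laguerre_sq_expand n t)]
  rw [integral_finset_sum _ (fun k _ => integrable_finset_sum _
    (fun l _ => (integrableOn_pow_exp (k + l)).const_mul _))]
  have hstep : ∀ k ∈ range (n + 1),
      (∫ t in Set.Ioi (0 : ℝ), ∑ l ∈ range (n + 1),
        lcoef n k * lcoef n l * (t ^ (k + l) * Real.exp (-t)))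
      = ∑ l ∈ range (n + 1), ((-1 : ℝ) ^ (k + l) * (n.choose k : ℝ) * (n.choose l : ℝ)
          * ((k + l).choose k : ℝ)) := by
    intro k _
    rw [integral_finset_sum _ (fun l _ => (integrableOn_pow_exp (k + l)).const_mul _)]
    apply Finset.sum_congr rfl; intro l _
    rw [integral_const_mul, integral_pow_exp]
    have hfact : ((k + l).factorial : ℝ)
        = ((k + l).choose k : ℝ) * (k.factorial : ℝ) * (l.factorial : ℝ) := by
      have h0 := Nat.add_choose_mul_factorial_mul_factorial k l
      rw [Nat.choose_symm_add]
      exact_mod_cast h0.symm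
    rw [hfact]
    unfold lcoef
    have hk : (k.factorial : ℝ) ≠ 0 := Nat.cast_ne_zero.mpr k.factorial_ne_zero
    have hl : (l.factorial : ℝ) ≠ 0 := Nat.cast_ne_zero.mpr l.factorial_ne_zero
    field_simp
    rw [pow_add]
    ring
  rw [Finset.sum_congr rfl hstep]
  exact_mod_cast laguerre_norm_sum n

lemma laguerre_hasSum {w : ℂ} (hw : ‖w‖ < 1) {t : ℝ} (ht : 0 ≤ t) :
    HasSum (fun n : ℕ => w ^ n * (laguerre n t : ℂ))
      ((1 - w)⁻¹ * Complex.exp (-(t : ℂ) * w / (1 - w))) := by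
  set F : ℕ × ℕ → ℂ := fun p =>
    (-1 : ℂ) ^ p.1 * ((p.1 + p.2).choose p.1 : ℂ) * (t : ℂ) ^ p.1 / (p.1.factorial : ℂ)
      * w ^ (p.1 + p.2) with hF_def
  set r : ℝ := ‖w‖ with hr_def
  have hr0 : 0 ≤ r := norm_nonneg w
  have h1r : (0 : ℝ) < 1 - r := by linarith
  have hrnorm : ‖r‖ < 1 := by rwa [Real.norm_eq_abs, abs_of_nonneg hr0]
  have h1w : (1 : ℂ) - w ≠ 0 := by
    intro h
    rw [sub_eq_zero] at h
    have h2 : ‖w‖ < 1 := hw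
    rw [← h] at h2
    simp at h2
  -- norm of F
  have hnormF : ∀ p : ℕ × ℕ, ‖F p‖
      = ((p.1 + p.2).choose p.1 : ℝ) * t ^ p.1 / (p.1.factorial : ℝ) * r ^ (p.1 + p.2) := by
    intro p
    rw [hF_def]
    simp only [norm_mul, norm_div, norm_pow, norm_neg, norm_one, one_pow, Complex.norm_natCast,
      Complex.norm_real, Real.norm_eq_abs, abs_of_nonneg ht]
    rw [one_mul]
  -- summability of norms
  have hsummN : Summable (fun p : ℕ × ℕ => ‖F p‖) := by
    have hinner : ∀ k : ℕ, Summable (fun m : ℕ => ‖F (k, m)‖) := by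
      intro k
      apply Summable.congr
        (((summable_choose_mul_geometric_of_norm_lt_one k hrnorm).mul_left
          (t ^ k / (k.factorial : ℝ) * r ^ k)))
      intro m
      rw [hnormF (k, m)]
      have : (k + m).choose k = (m + k).choose k := by rw [Nat.add_comm]
      rw [this, pow_add]
      ring
    have hinnerval : ∀ k : ℕ, ∑' m : ℕ, ‖F (k, m)‖
        = (1 / (1 - r)) * ((t * r / (1 - r)) ^ k / (k.factorial : ℝ)) := by
      intro k
      have h1 := (hasSum_choose_mul_geometric_of_norm_lt_one k hrnorm).mul_left
          (t ^ k / (k.factorial : ℝ) * r ^ k)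
      have h2 : HasSum (fun m : ℕ => ‖F (k, m)‖)
          (t ^ k / (k.factorial : ℝ) * r ^ k * (1 / (1 - r) ^ (k + 1))) := by
        apply h1.congr_fun
        intro m
        rw [hnormF (k, m)]
        have : (k + m).choose k = (m + k).choose k := by rw [Nat.add_comm]
        rw [this, pow_add]
        ring
      rw [h2.tsum_eq]
      have hfk : (k.factorial : ℝ) ≠ 0 := Nat.cast_ne_zero.mpr k.factorial_ne_zero
      have h1r' : (1 - r) ≠ 0 := ne_of_gt h1r
      rw [div_pow]
      field_simp
      ring
    apply (summable_prod_of_nonneg (fun p => norm_nonneg (F p))).mpr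
    refine ⟨hinner, ?_⟩
    apply Summable.congr (((Real.summable_pow_div_factorial (t * r / (1 - r))).mul_left
      (1 / (1 - r))))
    intro k
    rw [hinnerval k]
  have hsummF : Summable F := hsummN.of_norm
  -- the value of the tsum
  have hval : ∑' p : ℕ × ℕ, F p = (1 - w)⁻¹ * Complex.exp (-(t : ℂ) * w / (1 - w)) := by
    rw [Summable.tsum_prod' hsummF hsummF.prod_factor]
    have hinnerC : ∀ k : ℕ, ∑' m : ℕ, F (k, m)
        = (1 - w)⁻¹ * ((-(t : ℂ) * w / (1 - w)) ^ k / (k.factorial : ℂ)) := by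
      intro k
      have h1 := (hasSum_choose_mul_geometric_of_norm_lt_one k hw).mul_left
          ((-1 : ℂ) ^ k * (t : ℂ) ^ k / (k.factorial : ℂ) * w ^ k)
      have h2 : HasSum (fun m : ℕ => F (k, m))
          ((-1 : ℂ) ^ k * (t : ℂ) ^ k / (k.factorial : ℂ) * w ^ k * (1 / (1 - w) ^ (k + 1))) := by
        apply h1.congr_fun
        intro m
        rw [hF_def]
        have : (k + m).choose k = (m + k).choose k := by rw [Nat.add_comm]
        simp only [this, pow_add]
        ring
      rw [h2.tsum_eq]
      have hfk : (k.factorial : ℂ) ≠ 0 := Nat.cast_ne_zero.mpr k.factorial_ne_zero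
      rw [div_pow]
      field_simp
      ring
    rw [tsum_congr hinnerC, tsum_mul_left]
    congr 1
    rw [Complex.exp_eq_exp_ℂ, NormedSpace.exp_eq_tsum_div]
  -- transfer along the antidiagonal equivalence
  have hFS : HasSum F ((1 - w)⁻¹ * Complex.exp (-(t : ℂ) * w / (1 - w))) := by
    rw [← hval]; exact hsummF.hasSum
  have hFe : HasSum (F ∘ (Finset.HasAntidiagonal.sigmaAntidiagonalEquivProd (A := ℕ)))
      ((1 - w)⁻¹ * Complex.exp (-(t : ℂ) * w / (1 - w))) :=
    (Equiv.hasSum_iff _).mpr hFS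
  have hfiber : ∀ n : ℕ, HasSum
      (fun c : {p : ℕ × ℕ // p ∈ Finset.HasAntidiagonal.antidiagonal n} =>
        (F ∘ (Finset.HasAntidiagonal.sigmaAntidiagonalEquivProd (A := ℕ))) ⟨n, c⟩)
      (w ^ n * (laguerre n t : ℂ)) := by
    intro n
    have h1 := hasSum_fintype (fun c : {p : ℕ × ℕ // p ∈ Finset.HasAntidiagonal.antidiagonal n} =>
        (F ∘ (Finset.HasAntidiagonal.sigmaAntidiagonalEquivProd (A := ℕ))) ⟨n, c⟩)
    convert h1 using 1
    have h2 : ∑ c : {p : ℕ × ℕ // p ∈ Finset.HasAntidiagonal.antidiagonal n}, F c.val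
        = ∑ p ∈ Finset.HasAntidiagonal.antidiagonal n, F p := Finset.sum_coe_sort _ _
    simp only [Function.comp, Finset.HasAntidiagonal.sigmaAntidiagonalEquivProd_apply]
    rw [h2, Finset.Nat.sum_antidiagonal_eq_sum_range_succ_mk]
    have h3 : ∀ i ∈ range (n + 1), F (i, n - i)
        = w ^ n * ((-1 : ℂ) ^ i * (n.choose i : ℂ) * (t : ℂ) ^ i / (i.factorial : ℂ)) := by
      intro i hi
      rw [Finset.mem_range] at hi
      have : i + (n - i) = n := by omega
      rw [hF_def]
      simp only [this]
      ring
    rw [Finset.sum_congr rfl h3, ← Finset.mul_sum]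
    unfold laguerre
    push_cast
    ring
  exact HasSum.sigma hFe hfiber

lemma laguerre_continuous (n : ℕ) : Continuous (laguerre n) := by
  unfold laguerre
  fun_prop

/-- For `g` measurable with `∫₀^∞ e^{-t} |g(t)|² dt < ∞`, with Fourier–Laguerre coefficients
`gₙ = ∫₀^∞ g(t) Lₙ(t) e^{-t} dt`, for every `ρ` with `Im ρ > 0` and
`z = (1/2 + iρ)/(1/2 - iρ)`, the integral `∫₀^∞ g(t) e^{(iρ - 1/2)t} dt` converges absolutely,
the series `∑ (-1)ⁿ zⁿ gₙ` converges absolutely, and the integral equals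
`(z + 1) ∑_{n=0}^∞ (-1)ⁿ zⁿ gₙ`. -/
theorem laguerre_series_integral_representation (g : ℝ → ℂ) (hg_meas : Measurable g)
    (hg : IntegrableOn (fun t : ℝ => Real.exp (-t) * ‖g t‖ ^ 2) (Set.Ioi 0))
    (gc : ℕ → ℂ)
    (hgc : ∀ n, gc n = ∫ t in Set.Ioi (0 : ℝ),
      g t * (laguerre n t : ℂ) * (Real.exp (-t) : ℂ))
    (ρ : ℂ) (hρ : 0 < ρ.im) (z : ℂ)
    (hz : z = (1 / 2 + Complex.I * ρ) / (1 / 2 - Complex.I * ρ)) :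
    IntegrableOn (fun t : ℝ => g t * Complex.exp ((Complex.I * ρ - 1 / 2) * t)) (Set.Ioi 0) ∧
    Summable (fun n : ℕ => ‖(-1 : ℂ) ^ n * z ^ n * gc n‖) ∧
    (∫ t in Set.Ioi (0 : ℝ), g t * Complex.exp ((Complex.I * ρ - 1 / 2) * t))
      = (z + 1) * ∑' n : ℕ, (-1 : ℂ) ^ n * z ^ n * gc n := by
  have hIρre : (Complex.I * ρ).re = -ρ.im := by simp [Complex.mul_re]
  set a : ℂ := 1 / 2 - Complex.I * ρ with ha_def
  have ha_re : a.re = 1 / 2 + ρ.im := by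
    rw [ha_def, Complex.sub_re, hIρre]
    norm_num
  have ha_ne : a ≠ 0 := by
    intro h
    rw [h] at ha_re
    simp at ha_re
    linarith
  have hz1 : z + 1 = a⁻¹ := by
    rw [hz]
    field_simp
    rw [ha_def]
    ring
  have hz1ne : z + 1 ≠ 0 := by rw [hz1]; exact inv_ne_zero ha_ne
  have hza : z * a = 1 / 2 + Complex.I * ρ := by
    rw [hz]
    field_simp
  have hzlt : ‖z‖ < 1 := by
    rw [hz, norm_div, div_lt_one (norm_pos_iff.mpr ha_ne)]
    have h1 : ‖(1 / 2 + Complex.I * ρ)‖ ^ 2 < ‖a‖ ^ 2 := by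
      rw [Complex.sq_norm, Complex.sq_norm]
      simp only [Complex.normSq_apply, ha_def, Complex.add_re, Complex.add_im, Complex.sub_re,
        Complex.sub_im, hIρre, Complex.mul_im, Complex.I_re, Complex.I_im]
      simp
      nlinarith [hρ]
    exact lt_of_pow_lt_pow_left₀ 2 (norm_nonneg a) h1
  have hnz : ‖(-z : ℂ)‖ < 1 := by rwa [norm_neg]
  -- pointwise sum identity
  have hexp_key : ∀ t : ℝ,
      (1 - (-z))⁻¹ * Complex.exp (-(t : ℂ) * (-z) / (1 - (-z))) * (Real.exp (-t) : ℂ)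
        = (z + 1)⁻¹ * Complex.exp ((Complex.I * ρ - 1 / 2) * t) := by
    intro t
    have h1 : (1 : ℂ) - (-z) = z + 1 := by ring
    have h2 : -(t : ℂ) * (-z) / (1 - (-z)) = (t : ℂ) * (z * a) := by
      rw [h1, hz1]
      field_simp
    rw [h2, h1, hza]
    rw [show ((Real.exp (-t) : ℝ) : ℂ) = Complex.exp (-(t:ℂ)) by
      rw [Complex.ofReal_exp, Complex.ofReal_neg]]
    rw [mul_assoc, ← Complex.exp_add]
    congr 2
    push_cast
    ring
  have hpoint : ∀ t : ℝ, 0 ≤ t →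
      HasSum (fun n : ℕ => (-z) ^ n * (g t * (laguerre n t : ℂ) * (Real.exp (-t) : ℂ)))
        ((z + 1)⁻¹ * (g t * Complex.exp ((Complex.I * ρ - 1 / 2) * t))) := by
    intro t ht
    have h1 := (laguerre_hasSum hnz ht).mul_left (g t * (Real.exp (-t) : ℂ))
    have h2 : g t * (Real.exp (-t) : ℂ) *
        ((1 - (-z))⁻¹ * Complex.exp (-(t : ℂ) * (-z) / (1 - (-z))))
        = (z + 1)⁻¹ * (g t * Complex.exp ((Complex.I * ρ - 1 / 2) * t)) := by
      calc g t * (Real.exp (-t) : ℂ) *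
          ((1 - (-z))⁻¹ * Complex.exp (-(t : ℂ) * (-z) / (1 - (-z))))
          = g t * ((1 - (-z))⁻¹ * Complex.exp (-(t : ℂ) * (-z) / (1 - (-z)))
              * (Real.exp (-t) : ℂ)) := by ring
        _ = g t * ((z + 1)⁻¹ * Complex.exp ((Complex.I * ρ - 1 / 2) * t)) := by
              rw [hexp_key t]
        _ = (z + 1)⁻¹ * (g t * Complex.exp ((Complex.I * ρ - 1 / 2) * t)) := by ring
    rw [h2] at h1
    apply h1.congr_fun
    intro n
    ring
  -- abbreviations
  set μ := volume.restrict (Set.Ioi (0 : ℝ)) with hμ_def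
  have hhalf : ∀ t : ℝ, Real.exp (-(t / 2)) * Real.exp (-(t / 2)) = Real.exp (-t) := by
    intro t
    rw [← Real.exp_add]
    ring_nf
  set u : ℝ → ℝ := fun t => ‖g t‖ * Real.exp (-(t / 2)) with hu_def
  have hexphalf_meas : Measurable (fun t : ℝ => Real.exp (-(t / 2))) :=
    Real.measurable_exp.comp ((measurable_id.div_const 2).neg)
  have hu_meas : AEStronglyMeasurable u μ :=
    ((continuous_norm.measurable.comp hg_meas).mul hexphalf_meas).aestronglyMeasurable
  set B : ℝ := ∫ t in Set.Ioi (0 : ℝ), Real.exp (-t) * ‖g t‖ ^ 2 with hB_def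
  have hB0 : 0 ≤ B := by
    apply integral_nonneg
    intro t
    positivity
  set Cg : ℝ := B ^ ((1 : ℝ) / 2) with hCg_def
  have hCg0 : 0 ≤ Cg := Real.rpow_nonneg hB0 _
  have hu_sq : (fun t => u t ^ 2) = fun t => Real.exp (-t) * ‖g t‖ ^ 2 := by
    funext t
    rw [hu_def]
    simp only []
    rw [mul_pow, sq (Real.exp (-(t / 2))), hhalf]
    ring
  have hu_int : Integrable (fun t => u t ^ 2) μ := by rw [hu_sq]; exact hg
  have hu_mem : MemLp u 2 μ := (memLp_two_iff_integrable_sq hu_meas).mpr hu_int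
  have hpq : Real.HolderConjugate 2 2 := ⟨by norm_num, by norm_num, by norm_num⟩
  have hofreal2 : ENNReal.ofReal (2 : ℝ) = 2 := by
    rw [ENNReal.ofReal_ofNat]
  have hrpow_two : ∀ x : ℝ, 0 ≤ x → x ^ (2 : ℝ) = x ^ 2 := by
    intro x hx
    rw [show (2 : ℝ) = ((2 : ℕ) : ℝ) by norm_num, Real.rpow_natCast]
  -- Cauchy-Schwarz bound
  have hCS : ∀ n : ℕ, ∫ t in Set.Ioi (0 : ℝ),
      ‖g t * (laguerre n t : ℂ) * (Real.exp (-t) : ℂ)‖ ≤ Cg := by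
    intro n
    set v : ℝ → ℝ := fun t => |laguerre n t| * Real.exp (-(t / 2)) with hv_def
    have hv_meas : AEStronglyMeasurable v μ :=
      (((laguerre_continuous n).measurable.abs).mul hexphalf_meas).aestronglyMeasurable
    have hv_sq : (fun t => v t ^ 2) = fun t => laguerre n t ^ 2 * Real.exp (-t) := by
      funext t
      rw [hv_def]
      simp only []
      rw [mul_pow, sq_abs, sq (Real.exp (-(t / 2))), hhalf]
    have hv_int : Integrable (fun t => v t ^ 2) μ := by
      rw [hv_sq]; exact laguerre_sq_integrableOn n
    have hv_mem : MemLp v 2 μ := (memLp_two_iff_integrable_sq hv_meas).mpr hv_int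
    have hH := integral_mul_le_Lp_mul_Lq_of_nonneg hpq
      (Filter.Eventually.of_forall (fun t => by positivity : ∀ t, 0 ≤ u t))
      (Filter.Eventually.of_forall (fun t => by positivity : ∀ t, 0 ≤ v t))
      (by rw [hofreal2]; exact hu_mem) (by rw [hofreal2]; exact hv_mem)
    have hnormeq : ∀ t : ℝ, ‖g t * (laguerre n t : ℂ) * (Real.exp (-t) : ℂ)‖ = u t * v t := by
      intro t
      rw [norm_mul, norm_mul, Complex.norm_real, Complex.norm_real, Real.norm_eq_abs,
        Real.norm_eq_abs, abs_of_nonneg (Real.exp_nonneg _), hu_def, hv_def]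
      rw [← hhalf t]
      ring
    calc ∫ t in Set.Ioi (0 : ℝ), ‖g t * (laguerre n t : ℂ) * (Real.exp (-t) : ℂ)‖
        = ∫ t, u t * v t ∂μ := by
          rw [hμ_def]
          exact setIntegral_congr_fun measurableSet_Ioi (fun t _ => hnormeq t)
      _ ≤ (∫ t, u t ^ (2:ℝ) ∂μ) ^ ((1:ℝ)/2) * (∫ t, v t ^ (2:ℝ) ∂μ) ^ ((1:ℝ)/2) := by
          simpa using hH
      _ = Cg := by
          have h1 : (∫ t, u t ^ (2:ℝ) ∂μ) = B := by
            rw [hB_def, hμ_def, ← hu_sq]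
            exact setIntegral_congr_fun measurableSet_Ioi
              (fun t _ => hrpow_two (u t) (by positivity))
          have h2 : (∫ t, v t ^ (2:ℝ) ∂μ) = 1 := by
            rw [hμ_def]
            rw [show (∫ t in Set.Ioi (0:ℝ), v t ^ (2:ℝ)) = ∫ t in Set.Ioi (0:ℝ),
              laguerre n t ^ 2 * Real.exp (-t) from setIntegral_congr_fun measurableSet_Ioi
              (fun t _ => by rw [hrpow_two (v t) (by positivity)]; exact congrFun hv_sq t)]
            exact integral_laguerre_sq n
          rw [h1, h2, Real.one_rpow, mul_one, hCg_def]
  -- integrability of each coefficient integrand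
  have hLae : ∀ n : ℕ, AEStronglyMeasurable
      (fun t : ℝ => g t * (laguerre n t : ℂ) * (Real.exp (-t) : ℂ)) μ := by
    intro n
    exact ((hg_meas.aestronglyMeasurable.mul
      ((Complex.measurable_ofReal.comp (laguerre_continuous n).measurable)).aestronglyMeasurable).mul
      ((Complex.measurable_ofReal.comp
        (Real.measurable_exp.comp measurable_neg)).aestronglyMeasurable))
  have hInt : ∀ n : ℕ, Integrable
      (fun t : ℝ => g t * (laguerre n t : ℂ) * (Real.exp (-t) : ℂ)) μ := by
    intro n
    apply Integrable.mono' (((hg.add (laguerre_sq_integrableOn n)).const_mul (1/2 : ℝ)))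
      (hLae n)
    apply Filter.Eventually.of_forall
    intro t
    simp only [Pi.add_apply]
    have h1 : ‖g t * (laguerre n t : ℂ) * (Real.exp (-t) : ℂ)‖
        = (‖g t‖ * Real.exp (-(t/2))) * (|laguerre n t| * Real.exp (-(t/2))) := by
      rw [norm_mul, norm_mul, Complex.norm_real, Complex.norm_real, Real.norm_eq_abs,
        Real.norm_eq_abs, abs_of_nonneg (Real.exp_nonneg _)]
      rw [← hhalf t]
      ring
    rw [h1]
    have h2 : (‖g t‖ * Real.exp (-(t/2))) * (|laguerre n t| * Real.exp (-(t/2)))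
        ≤ (1/2) * ((‖g t‖ * Real.exp (-(t/2)))^2
            + (|laguerre n t| * Real.exp (-(t/2)))^2) := by
      nlinarith [sq_nonneg (‖g t‖ * Real.exp (-(t/2))
        - |laguerre n t| * Real.exp (-(t/2)))]
    calc (‖g t‖ * Real.exp (-(t/2))) * (|laguerre n t| * Real.exp (-(t/2)))
        ≤ (1/2) * ((‖g t‖ * Real.exp (-(t/2)))^2
            + (|laguerre n t| * Real.exp (-(t/2)))^2) := h2
      _ = (1/2) * (Real.exp (-t) * ‖g t‖ ^ 2 + laguerre n t ^ 2 * Real.exp (-t)) := by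
          rw [mul_pow, mul_pow, sq_abs, sq (Real.exp (-(t/2))), hhalf]
          ring
  -- norm of gc
  have hgc_norm : ∀ n : ℕ, ‖gc n‖ ≤ Cg := by
    intro n
    rw [hgc n]
    exact le_trans (norm_integral_le_integral_norm _) (hCS n)
  -- summability of the geometric bound
  have hgeom : Summable (fun n : ℕ => Cg * ‖z‖ ^ n) :=
    (summable_geometric_of_lt_one (norm_nonneg z) hzlt).mul_left Cg
  -- Second conjunct
  have hsumm : Summable (fun n : ℕ => ‖(-1 : ℂ) ^ n * z ^ n * gc n‖) := by
    apply Summable.of_nonneg_of_le (fun n => norm_nonneg _) _ hgeom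
    intro n
    rw [norm_mul, norm_mul, norm_pow, norm_pow, norm_neg, norm_one, one_pow, one_mul]
    calc ‖z‖ ^ n * ‖gc n‖ ≤ ‖z‖ ^ n * Cg :=
          mul_le_mul_of_nonneg_left (hgc_norm n) (by positivity)
      _ = Cg * ‖z‖ ^ n := by ring
  -- First conjunct
  have hI1 : IntegrableOn (fun t : ℝ => g t * Complex.exp ((Complex.I * ρ - 1 / 2) * t))
      (Set.Ioi 0) := by
    have hmeas2 : AEStronglyMeasurable
        (fun t : ℝ => g t * Complex.exp ((Complex.I * ρ - 1 / 2) * t)) μ :=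
      (hg_meas.aestronglyMeasurable.mul
        (Complex.continuous_exp.comp (continuous_const.mul
          Complex.continuous_ofReal)).measurable.aestronglyMeasurable)
    apply Integrable.mono' ((hg.add (exp_neg_integrableOn_Ioi 0
        (by positivity : (0:ℝ) < 2 * ρ.im))).const_mul (1/2 : ℝ)) hmeas2
    rw [ae_restrict_iff' measurableSet_Ioi]
    apply Filter.Eventually.of_forall
    intro t ht
    simp only [Pi.add_apply]
    have hre : ((Complex.I * ρ - 1 / 2) * (t : ℂ)).re = (-ρ.im - 1/2) * t := by
      rw [Complex.mul_re]
      simp [Complex.sub_re, Complex.sub_im, hIρre, Complex.ofReal_re, Complex.ofReal_im]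
    have h1 : ‖g t * Complex.exp ((Complex.I * ρ - 1 / 2) * t)‖
        = (‖g t‖ * Real.exp (-(t/2))) * Real.exp (-ρ.im * t) := by
      rw [norm_mul, Complex.norm_exp, hre,
        show (-ρ.im - 1/2) * t = (-(t/2)) + (-ρ.im * t) by ring, Real.exp_add]
      ring
    rw [h1]
    have h2 : (‖g t‖ * Real.exp (-(t/2))) * Real.exp (-ρ.im * t)
        ≤ (1/2) * ((‖g t‖ * Real.exp (-(t/2)))^2 + (Real.exp (-ρ.im * t))^2) := by
      nlinarith [sq_nonneg (‖g t‖ * Real.exp (-(t/2)) - Real.exp (-ρ.im * t))]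
    calc (‖g t‖ * Real.exp (-(t/2))) * Real.exp (-ρ.im * t)
        ≤ (1/2) * ((‖g t‖ * Real.exp (-(t/2)))^2 + (Real.exp (-ρ.im * t))^2) := h2
      _ = (1/2) * (Real.exp (-t) * ‖g t‖ ^ 2 + Real.exp (-(2 * ρ.im) * t)) := by
          have e1 : Real.exp (-ρ.im * t) * Real.exp (-ρ.im * t) = Real.exp (-(2 * ρ.im) * t) := by
            rw [← Real.exp_add]
            ring_nf
          rw [mul_pow, sq (Real.exp (-(t/2))), hhalf, sq (Real.exp (-ρ.im * t)), e1]
          ring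
  -- main equality
  set f : ℕ → ℝ → ℂ := fun n t =>
    (-z) ^ n * (g t * (laguerre n t : ℂ) * (Real.exp (-t) : ℂ)) with hf_def
  have hfae : ∀ n : ℕ, AEStronglyMeasurable (f n) μ := fun n => (hLae n).const_mul _
  have hfint : ∀ n : ℕ, Integrable (f n) μ := fun n => (hInt n).const_mul _
  have hfnorm : ∀ n : ℕ, (∫ t, ‖f n t‖ ∂μ) ≤ Cg * ‖z‖ ^ n := by
    intro n
    have h1 : (fun t => ‖f n t‖)
        = fun t => ‖z‖ ^ n * ‖g t * (laguerre n t : ℂ) * (Real.exp (-t) : ℂ)‖ := by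
      funext t
      rw [hf_def]
      simp only []
      rw [norm_mul, norm_pow, norm_neg]
    rw [h1, integral_const_mul]
    calc ‖z‖ ^ n * ∫ t, ‖g t * (laguerre n t : ℂ) * (Real.exp (-t) : ℂ)‖ ∂μ
        ≤ ‖z‖ ^ n * Cg := mul_le_mul_of_nonneg_left (hCS n) (by positivity)
      _ = Cg * ‖z‖ ^ n := by ring
  have hlint : ∑' n : ℕ, ∫⁻ t, ‖f n t‖ₑ ∂μ ≠ ⊤ := by
    have h1 : ∀ n : ℕ, ∫⁻ t, ‖f n t‖ₑ ∂μ ≤ ENNReal.ofReal (Cg * ‖z‖ ^ n) := by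
      intro n
      rw [← ofReal_integral_norm_eq_lintegral_enorm (hfint n)]
      exact ENNReal.ofReal_le_ofReal (hfnorm n)
    apply ne_top_of_le_ne_top _ (ENNReal.tsum_le_tsum h1)
    rw [← ENNReal.ofReal_tsum_of_nonneg (fun n => by positivity) hgeom]
    exact ENNReal.ofReal_ne_top
  have hTS : ∫ t, (∑' n : ℕ, f n t) ∂μ = ∑' n : ℕ, ∫ t, f n t ∂μ :=
    integral_tsum hfae hlint
  have hLHS : ∫ t, (∑' n : ℕ, f n t) ∂μ
      = (z + 1)⁻¹ * ∫ t in Set.Ioi (0 : ℝ), g t * Complex.exp ((Complex.I * ρ - 1 / 2) * t) := by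
    rw [hμ_def]
    rw [setIntegral_congr_fun measurableSet_Ioi (fun t ht => (hpoint t (le_of_lt ht)).tsum_eq)]
    rw [integral_const_mul]
  have hRHS : ∀ n : ℕ, ∫ t, f n t ∂μ = (-z) ^ n * gc n := by
    intro n
    rw [hf_def]
    simp only []
    rw [integral_const_mul, hμ_def, ← hgc n]
  have hfinal : (z + 1)⁻¹ * (∫ t in Set.Ioi (0 : ℝ),
      g t * Complex.exp ((Complex.I * ρ - 1 / 2) * t)) = ∑' n : ℕ, (-z) ^ n * gc n := by
    rw [← hLHS, hTS]
    exact tsum_congr hRHS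
  refine ⟨hI1, hsumm, ?_⟩
  have hsum_eq : ∑' n : ℕ, (-1 : ℂ) ^ n * z ^ n * gc n = ∑' n : ℕ, (-z) ^ n * gc n := by
    apply tsum_congr
    intro n
    conv_rhs => rw [neg_pow]
  rw [hsum_eq, ← hfinal]
  field_simp
  rfl
end

section
/- Let r : ℝ → ℂ be continuous with ∫₀^∞ |r(t)| dt < ∞(more precisely, ∫_c^∞ |r| < ∞ for every c), let f : ℝ → ℂ be continuous with inf_{x ∈ ℝ} |f(x)| > 0, f bounded, and f(x) → 1 as x → +∞, and let h : ℝ → ℂ be continuous with e^{x} h(x) → 0 as x → +∞. Then the function a(x) := f(x) ∫ₓ^∞ (e^{t} r(t) / f(t)²) ( ∫ₜ^∞ f(s) h(s) ds ) dt is well defined (all integrals converge absolutely), and for every ε > 0 there exists X ∈ ℝ such that for all x ≥ X, |a(x)| ≤ ε ∫ₓ^∞ |r(t)| dt. -/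
open MeasureTheory Filter

/-- Inductive step in the asymptotics `a_{2,n}(x) = o(∫ₓ^∞ |r|)`: if `r` is continuous and
integrable on half-lines `[c, ∞)`, `f` is continuous, bounded, bounded away from `0`, with
`f(x) → 1` as `x → +∞`, and `h` is continuous with `eˣ h(x) → 0`, then
`a(x) = f(x) ∫ₓ^∞ (eᵗ r(t)/f(t)²) ∫ₜ^∞ f(s) h(s) ds dt` is well defined and for every
`ε > 0` there is `X` with `‖a(x)‖ ≤ ε ∫ₓ^∞ |r(t)| dt` for all `x ≥ X`. -/
theorem spps_coefficient_littleo_step (r f h : ℝ → ℂ)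
    (hr : Continuous r) (hf : Continuous f) (hh : Continuous h)
    (hrint : ∀ c : ℝ, IntegrableOn r (Set.Ioi c))
    (hfinf : ∃ δ : ℝ, 0 < δ ∧ ∀ x : ℝ, δ ≤ ‖f x‖)
    (hfb : ∃ C : ℝ, ∀ x : ℝ, ‖f x‖ ≤ C)
    (hf1 : Tendsto f atTop (nhds 1))
    (hh0 : Tendsto (fun x : ℝ => Complex.exp x * h x) atTop (nhds 0))
    (a : ℝ → ℂ)
    (ha : ∀ x : ℝ, a x = f x * ∫ t in Set.Ioi x,
      (Complex.exp t * r t / f t ^ 2) * ∫ s in Set.Ioi t, f s * h s) :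
    (∀ x : ℝ, IntegrableOn (fun s : ℝ => f s * h s) (Set.Ioi x)) ∧
    (∀ x : ℝ, IntegrableOn (fun t : ℝ =>
      (Complex.exp t * r t / f t ^ 2) * ∫ s in Set.Ioi t, f s * h s) (Set.Ioi x)) ∧
    ∀ ε : ℝ, 0 < ε → ∃ X : ℝ, ∀ x : ℝ, X ≤ x →
      ‖a x‖ ≤ ε * ∫ t in Set.Ioi x, ‖r t‖ := by
  obtain ⟨δ, hδ, hfδ⟩ := hfinf
  obtain ⟨C, hC⟩ := hfb
  have hδC : δ ≤ C := le_trans (hfδ 0) (hC 0)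
  have hC0 : 0 < C := lt_of_lt_of_le hδ hδC
  set g : ℝ → ℂ := fun x => Complex.exp x * h x with hg
  have hgcont : Continuous g :=
    (Complex.continuous_exp.comp Complex.continuous_ofReal).mul hh
  -- ‖h s‖ = e^{-s} ‖g s‖
  have hnorm_g : ∀ s : ℝ, ‖g s‖ = Real.exp s * ‖h s‖ := by
    intro s
    simp [hg, norm_mul, Complex.norm_exp]
  have hnorm_h : ∀ s : ℝ, ‖h s‖ = Real.exp (-s) * ‖g s‖ := by
    intro s
    rw [hnorm_g s, Real.exp_neg]
    field_simp
  -- eventual smallness of g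
  have hgsmall : ∀ η : ℝ, 0 < η → ∃ X : ℝ, ∀ s : ℝ, X ≤ s → ‖g s‖ ≤ η := by
    intro η hη
    have h2 : ∀ᶠ s in atTop, ‖g s‖ < η :=
      Tendsto.eventually_lt_const hη (by simpa using hh0.norm)
    obtain ⟨X, hX⟩ := eventually_atTop.mp h2
    exact ⟨X, fun s hs => (hX s hs).le⟩
  -- g is bounded on every half-line [x, ∞)
  have hgbdd : ∀ x : ℝ, ∃ M : ℝ, 0 ≤ M ∧ ∀ s : ℝ, x ≤ s → ‖g s‖ ≤ M := by
    intro x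
    obtain ⟨X0, hX0⟩ := hgsmall 1 one_pos
    obtain ⟨M0, hM0⟩ :=
      (isCompact_Icc (a := x) (b := X0)).exists_bound_of_continuousOn hgcont.continuousOn
    refine ⟨max M0 1, le_trans zero_le_one (le_max_right _ _), fun s hs => ?_⟩
    rcases le_total s X0 with hsX | hsX
    · exact le_trans (hM0 s ⟨hs, hsX⟩) (le_max_left _ _)
    · exact le_trans (hX0 s hsX) (le_max_right _ _)
  -- pointwise bound for f * h
  have hFbound : ∀ (M x : ℝ), (∀ s : ℝ, x ≤ s → ‖g s‖ ≤ M) →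
      ∀ s : ℝ, x ≤ s → ‖f s * h s‖ ≤ C * M * Real.exp (-s) := by
    intro M x hM s hs
    rw [norm_mul, hnorm_h]
    have h1 : ‖f s‖ * (Real.exp (-s) * ‖g s‖) ≤ C * (Real.exp (-s) * M) :=
      mul_le_mul (hC s)
        (mul_le_mul_of_nonneg_left (hM s hs) (Real.exp_pos (-s)).le)
        (by positivity) hC0.le
    calc ‖f s‖ * (Real.exp (-s) * ‖g s‖) ≤ C * (Real.exp (-s) * M) := h1
      _ = C * M * Real.exp (-s) := by ring
  -- the dominating exponential is integrable
  have hexpint : ∀ (c K : ℝ), IntegrableOn (fun s : ℝ => K * Real.exp (-s)) (Set.Ioi c) := by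
    intro c K
    have := (exp_neg_integrableOn_Ioi c (by norm_num : (0:ℝ) < 1)).const_mul K
    simp only [neg_one_mul] at this
    exact this
  -- inner integrability
  have hFint : ∀ x : ℝ, IntegrableOn (fun s : ℝ => f s * h s) (Set.Ioi x) := by
    intro x
    obtain ⟨M, hM0, hM⟩ := hgbdd x
    refine Integrable.mono' (hexpint x (C * M)) ((hf.mul hh).aestronglyMeasurable.restrict) ?_
    filter_upwards [ae_restrict_mem measurableSet_Ioi] with s hs
    exact hFbound M x hM s (le_of_lt hs)
  -- bound on inner integral
  have hIbound : ∀ (M x : ℝ), (∀ s : ℝ, x ≤ s → ‖g s‖ ≤ M) →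
      ∀ t : ℝ, x ≤ t → ‖∫ s in Set.Ioi t, f s * h s‖ ≤ C * M * Real.exp (-t) := by
    intro M x hM t ht
    have step : ‖∫ s in Set.Ioi t, f s * h s‖ ≤ ∫ s in Set.Ioi t, C * M * Real.exp (-s) := by
      refine norm_integral_le_of_norm_le (hexpint t (C * M)) ?_
      filter_upwards [ae_restrict_mem measurableSet_Ioi] with s hs
      exact hFbound M x hM s (le_trans ht hs.le)
    refine le_trans step (le_of_eq ?_)
    rw [MeasureTheory.integral_const_mul, integral_exp_neg_Ioi]
  -- the inner integral, as a function of t, is continuous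
  have hIcont : Continuous (fun t : ℝ => ∫ s in Set.Ioi t, f s * h s) := by
    have key : ∀ t : ℝ, (∫ s in Set.Ioi t, f s * h s)
        = (∫ s in Set.Ioi (0:ℝ), f s * h s) - ∫ s in (0:ℝ)..t, f s * h s := by
      intro t
      rcases le_total (0:ℝ) t with h0 | h0
      · have hsplit : Set.Ioc (0:ℝ) t ∪ Set.Ioi t = Set.Ioi (0:ℝ) :=
          Set.Ioc_union_Ioi_eq_Ioi h0
        have hu := setIntegral_union (f := fun s => f s * h s) (μ := volume)
          (Set.Ioc_disjoint_Ioi le_rfl) measurableSet_Ioi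
          ((hFint 0).mono_set Set.Ioc_subset_Ioi_self) (hFint t)
        rw [hsplit] at hu
        rw [intervalIntegral.integral_of_le h0, hu]
        ring
      · have hsplit : Set.Ioc t (0:ℝ) ∪ Set.Ioi (0:ℝ) = Set.Ioi t :=
          Set.Ioc_union_Ioi_eq_Ioi h0
        have hu := setIntegral_union (f := fun s => f s * h s) (μ := volume)
          (Set.Ioc_disjoint_Ioi le_rfl) measurableSet_Ioi
          ((hFint t).mono_set Set.Ioc_subset_Ioi_self) (hFint 0)
        rw [hsplit] at hu
        rw [intervalIntegral.integral_symm, intervalIntegral.integral_of_le h0, hu]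
        ring
    rw [show (fun t : ℝ => ∫ s in Set.Ioi t, f s * h s)
        = fun t : ℝ => (∫ s in Set.Ioi (0:ℝ), f s * h s) - ∫ s in (0:ℝ)..t, f s * h s
        from funext key]
    exact continuous_const.sub
      (intervalIntegral.continuous_primitive
        (fun a b => (hf.mul hh).intervalIntegrable a b) 0)
  have hfne : ∀ t : ℝ, f t ≠ 0 := by
    intro t ht
    have := hfδ t
    rw [ht, norm_zero] at this
    linarith
  have hqcont : Continuous (fun t : ℝ => Complex.exp t * r t / f t ^ 2) :=
    ((Complex.continuous_exp.comp Complex.continuous_ofReal).mul hr).div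
      (hf.pow 2) (fun t => pow_ne_zero 2 (hfne t))
  have hqbound : ∀ t : ℝ, ‖Complex.exp t * r t / f t ^ 2‖ ≤ Real.exp t * ‖r t‖ / δ ^ 2 := by
    intro t
    rw [norm_div, norm_mul, norm_pow]
    have h1 : ‖Complex.exp (t:ℂ)‖ = Real.exp t := by
      simp [Complex.norm_exp]
    rw [h1]
    exact div_le_div_of_nonneg_left (by positivity) (by positivity)
      (pow_le_pow_left₀ hδ.le (hfδ t) 2)
  -- pointwise bound for the outer integrand
  have hGbound : ∀ (M x : ℝ), 0 ≤ M → (∀ s : ℝ, x ≤ s → ‖g s‖ ≤ M) → ∀ t : ℝ, x ≤ t →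
      ‖(Complex.exp t * r t / f t ^ 2) * ∫ s in Set.Ioi t, f s * h s‖
        ≤ (C * M / δ ^ 2) * ‖r t‖ := by
    intro M x hM0 hM t ht
    rw [norm_mul]
    have h1 : ‖Complex.exp t * r t / f t ^ 2‖ * ‖∫ s in Set.Ioi t, f s * h s‖
        ≤ (Real.exp t * ‖r t‖ / δ ^ 2) * (C * M * Real.exp (-t)) :=
      mul_le_mul (hqbound t) (hIbound M x hM t ht) (norm_nonneg _) (by positivity)
    refine le_trans h1 (le_of_eq ?_)
    have he : Real.exp t * Real.exp (-t) = 1 := by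
      rw [← Real.exp_add]; simp
    calc (Real.exp t * ‖r t‖ / δ ^ 2) * (C * M * Real.exp (-t))
        = (Real.exp t * Real.exp (-t)) * ((C * M / δ ^ 2) * ‖r t‖) := by ring
      _ = (C * M / δ ^ 2) * ‖r t‖ := by rw [he, one_mul]
  -- outer integrability
  have hGint : ∀ x : ℝ, IntegrableOn (fun t : ℝ =>
      (Complex.exp t * r t / f t ^ 2) * ∫ s in Set.Ioi t, f s * h s) (Set.Ioi x) := by
    intro x
    obtain ⟨M, hM0, hM⟩ := hgbdd x
    refine Integrable.mono' (((hrint x).norm).const_mul (C * M / δ ^ 2))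
      ((hqcont.mul hIcont).aestronglyMeasurable.restrict) ?_
    filter_upwards [ae_restrict_mem measurableSet_Ioi] with t ht
    exact hGbound M x hM0 hM t ht.le
  refine ⟨hFint, hGint, ?_⟩
  intro ε hε
  have hη : 0 < ε * δ ^ 2 / (2 * C ^ 2) := by positivity
  set η : ℝ := ε * δ ^ 2 / (2 * C ^ 2) with hηdef
  obtain ⟨X, hX⟩ := hgsmall η hη
  refine ⟨X, fun x hx => ?_⟩
  have hM : ∀ s : ℝ, x ≤ s → ‖g s‖ ≤ η := fun s hs => hX s (le_trans hx hs)
  have hrnn : (0:ℝ) ≤ ∫ t in Set.Ioi x, ‖r t‖ :=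
    integral_nonneg (fun t => norm_nonneg _)
  rw [ha x, norm_mul]
  have step1 : ‖∫ t in Set.Ioi x,
      (Complex.exp t * r t / f t ^ 2) * ∫ s in Set.Ioi t, f s * h s‖
      ≤ (C * η / δ ^ 2) * ∫ t in Set.Ioi x, ‖r t‖ := by
    have step : ‖∫ t in Set.Ioi x,
        (Complex.exp t * r t / f t ^ 2) * ∫ s in Set.Ioi t, f s * h s‖
        ≤ ∫ t in Set.Ioi x, (C * η / δ ^ 2) * ‖r t‖ := by
      refine norm_integral_le_of_norm_le (((hrint x).norm).const_mul _) ?_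
      filter_upwards [ae_restrict_mem measurableSet_Ioi] with t ht
      exact hGbound η x hη.le hM t ht.le
    refine le_trans step (le_of_eq ?_)
    rw [MeasureTheory.integral_const_mul]
  have step2 : ‖f x‖ * ‖∫ t in Set.Ioi x,
      (Complex.exp t * r t / f t ^ 2) * ∫ s in Set.Ioi t, f s * h s‖
      ≤ C * ((C * η / δ ^ 2) * ∫ t in Set.Ioi x, ‖r t‖) :=
    mul_le_mul (hC x) step1 (norm_nonneg _) hC0.le
  refine le_trans step2 ?_
  have hkey : C * (C * η / δ ^ 2) ≤ ε := by
    have hCne : C ≠ 0 := ne_of_gt hC0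
    have hδne : δ ≠ 0 := ne_of_gt hδ
    have heq : C * (C * η / δ ^ 2) = ε / 2 := by
      rw [hηdef]
      field_simp
    rw [heq]
    linarith
  calc C * ((C * η / δ ^ 2) * ∫ t in Set.Ioi x, ‖r t‖)
      = (C * (C * η / δ ^ 2)) * ∫ t in Set.Ioi x, ‖r t‖ := by ring
    _ ≤ ε * ∫ t in Set.Ioi x, ‖r t‖ := mul_le_mul_of_nonneg_right hkey hrnn
end

section
/- Let q, r : ℝ → ℂ be continuous, let ρ ∈ ℂ with Im ρ > 0, and set z = (1/2 + iρ)/(1/2 − iρ), so |z| < 1. Let a_{1,n}, a_{2,n} : ℝ → ℂ (n ∈ ℕ) be continuously differentiable functions satisfying the recurrence relations: a_{2,n}'(x) = r(x) a_{1,n}(x) for all n ≥ 0; a_{1,0}'(x) − a_{1,0}(x) − q(x) a_{2,0}(x) = q(x); and a_{1,n}'(x) − a_{1,n}(x) − q(x) a_{2,n}(x) = a_{1,n−1}'(x) + a_{1,n−1}(x) − q(x) a_{2,n−1}(x) for all n ≥ 1. Assume that for i = 1, 2 the series ∑_{n=0}^∞ (−1)ⁿ zⁿ a_{i,n}(x)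 and ∑_{n=0}^∞ (−1)ⁿ zⁿ a_{i,n}'(x) converge uniformly on compact subsets of ℝ. Then the function ψ(x) := e^{iρx} ( (0, 1)ᵀ + (z + 1) ∑_{n=0}^∞ (−1)ⁿ zⁿ (a_{1,n}(x), a_{2,n}(x))ᵀ ) is a differentiable solution of the AKNS system: ψ₁' + iρ ψ₁ = q ψ₂ and ψ₂' − iρ ψ₂ = r ψ₁ on ℝ. -/
open Filter

private lemma hasDerivAt_tsum_aux (c : ℕ → ℂ) (a : ℕ → ℝ → ℂ)
    (ha : ∀ n, ContDiff ℝ 1 (a n))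
    (hsum : ∀ x : ℝ, Summable (fun n : ℕ => c n * a n x))
    (hunif' : ∀ K : Set ℝ, IsCompact K → TendstoUniformlyOn
      (fun N (x : ℝ) => ∑ n ∈ Finset.range N, c n * deriv (a n) x)
      (fun x => ∑' n : ℕ, c n * deriv (a n) x) atTop K)
    (x : ℝ) :
    HasDerivAt (fun y => ∑' n : ℕ, c n * a n y) (∑' n : ℕ, c n * deriv (a n) x) x := by
  have hK : IsCompact (Metric.closedBall x 1) := isCompact_closedBall x 1
  have hopen : IsOpen (Metric.ball x 1) := Metric.isOpen_ball
  have hmem : x ∈ Metric.ball x 1 := Metric.mem_ball_self one_pos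
  refine hasDerivAt_of_tendstoUniformlyOn
    (f := fun N y => ∑ n ∈ Finset.range N, c n * a n y) hopen
    ((hunif' _ hK).mono Metric.ball_subset_closedBall)
    (Filter.Eventually.of_forall fun N y hy => ?_) (fun y hy => ?_) hmem
  · exact HasDerivAt.fun_sum fun n _ =>
      (((ha n).differentiable one_ne_zero).differentiableAt.hasDerivAt.const_mul (c n))
  · exact (hsum y).hasSum.tendsto_sum_nat

/-- If the SPPS coefficients `a_{1,n}, a_{2,n}` are continuously differentiable functions
satisfying the recurrence relations of the SPPS method, and all four series
`∑ (-1)ⁿ zⁿ a_{i,n}(x)`, `∑ (-1)ⁿ zⁿ a_{i,n}'(x)` converge (uniformly on compacts), then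
`ψ(x) = e^{iρx}((0,1)ᵀ + (z+1) ∑ (-1)ⁿ zⁿ aₙ(x))` solves the AKNS system
`ψ₁' + iρ ψ₁ = q ψ₂`, `ψ₂' - iρ ψ₂ = r ψ₁`. -/
theorem spps_series_solves_akns (q r : ℝ → ℂ) (hq : Continuous q) (hr : Continuous r)
    (ρ : ℂ) (hρ : 0 < ρ.im) (z : ℂ)
    (hz : z = (1 / 2 + Complex.I * ρ) / (1 / 2 - Complex.I * ρ))
    (a₁ a₂ : ℕ → ℝ → ℂ)
    (ha₁ : ∀ n, ContDiff ℝ 1 (a₁ n)) (ha₂ : ∀ n, ContDiff ℝ 1 (a₂ n))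
    (hrec₀ : ∀ n, ∀ x : ℝ, deriv (a₂ n) x = r x * a₁ n x)
    (hrec₁ : ∀ x : ℝ, deriv (a₁ 0) x - a₁ 0 x - q x * a₂ 0 x = q x)
    (hrec₂ : ∀ n, ∀ x : ℝ, deriv (a₁ (n + 1)) x - a₁ (n + 1) x - q x * a₂ (n + 1) x
      = deriv (a₁ n) x + a₁ n x - q x * a₂ n x)
    (hsum₁ : ∀ x : ℝ, Summable (fun n : ℕ => (-1 : ℂ) ^ n * z ^ n * a₁ n x))
    (hsum₂ : ∀ x : ℝ, Summable (fun n : ℕ => (-1 : ℂ) ^ n * z ^ n * a₂ n x))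
    (hsum₁' : ∀ x : ℝ, Summable (fun n : ℕ => (-1 : ℂ) ^ n * z ^ n * deriv (a₁ n) x))
    (hsum₂' : ∀ x : ℝ, Summable (fun n : ℕ => (-1 : ℂ) ^ n * z ^ n * deriv (a₂ n) x))
    (hunif₁ : ∀ K : Set ℝ, IsCompact K → TendstoUniformlyOn
      (fun N (x : ℝ) => ∑ n ∈ Finset.range N, (-1 : ℂ) ^ n * z ^ n * a₁ n x)
      (fun x => ∑' n : ℕ, (-1 : ℂ) ^ n * z ^ n * a₁ n x) atTop K)
    (hunif₂ : ∀ K : Set ℝ, IsCompact K → TendstoUniformlyOn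
      (fun N (x : ℝ) => ∑ n ∈ Finset.range N, (-1 : ℂ) ^ n * z ^ n * a₂ n x)
      (fun x => ∑' n : ℕ, (-1 : ℂ) ^ n * z ^ n * a₂ n x) atTop K)
    (hunif₁' : ∀ K : Set ℝ, IsCompact K → TendstoUniformlyOn
      (fun N (x : ℝ) => ∑ n ∈ Finset.range N, (-1 : ℂ) ^ n * z ^ n * deriv (a₁ n) x)
      (fun x => ∑' n : ℕ, (-1 : ℂ) ^ n * z ^ n * deriv (a₁ n) x) atTop K)
    (hunif₂' : ∀ K : Set ℝ, IsCompact K → TendstoUniformlyOn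
      (fun N (x : ℝ) => ∑ n ∈ Finset.range N, (-1 : ℂ) ^ n * z ^ n * deriv (a₂ n) x)
      (fun x => ∑' n : ℕ, (-1 : ℂ) ^ n * z ^ n * deriv (a₂ n) x) atTop K)
    (ψ₁ ψ₂ : ℝ → ℂ)
    (hψ₁ : ∀ x : ℝ, ψ₁ x = Complex.exp (Complex.I * ρ * x)
      * ((z + 1) * ∑' n : ℕ, (-1 : ℂ) ^ n * z ^ n * a₁ n x))
    (hψ₂ : ∀ x : ℝ, ψ₂ x = Complex.exp (Complex.I * ρ * x)
      * (1 + (z + 1) * ∑' n : ℕ, (-1 : ℂ) ^ n * z ^ n * a₂ n x)) :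
    ∀ x : ℝ,
      HasDerivAt ψ₁ (q x * ψ₂ x - Complex.I * ρ * ψ₁ x) x ∧
      HasDerivAt ψ₂ (r x * ψ₁ x + Complex.I * ρ * ψ₂ x) x := by
  -- notation
  set c : ℕ → ℂ := fun n => (-1 : ℂ) ^ n * z ^ n with hc
  -- z ≠ relations
  have hden : (1 / 2 - Complex.I * ρ) ≠ 0 := by
    intro h
    have := congrArg Complex.re h
    simp [Complex.mul_re] at this
    linarith
  have hden2 : (1 : ℂ) - Complex.I * ρ * 2 ≠ 0 := by
    intro h
    apply hden
    linear_combination h / 2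
  have hkey : z - 1 = (z + 1) * (2 * Complex.I * ρ) := by
    rw [hz, div_sub_one hden, div_add_one hden, div_mul_eq_mul_div,
      div_eq_div_iff hden hden]
    ring
  intro x
  -- abbreviations for the sums at x
  set S₁ := ∑' n : ℕ, c n * a₁ n x with hS₁def
  set S₂ := ∑' n : ℕ, c n * a₂ n x with hS₂def
  set T₁ := ∑' n : ℕ, c n * deriv (a₁ n) x with hT₁def
  set T₂ := ∑' n : ℕ, c n * deriv (a₂ n) x with hT₂def
  set E := Complex.exp (Complex.I * ρ * x) with hE
  -- derivative of the exponential factor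
  have hexp : HasDerivAt (fun y : ℝ => Complex.exp (Complex.I * ρ * y))
      (Complex.I * ρ * E) x := by
    have h1 : HasDerivAt (fun y : ℝ => Complex.I * ρ * (y : ℂ)) (Complex.I * ρ) x := by
      simpa using (Complex.ofRealCLM.hasDerivAt (x := x)).const_mul (Complex.I * ρ)
    simpa [hE, mul_comm] using h1.cexp
  -- derivatives of the two series
  have hS₁d : HasDerivAt (fun y => ∑' n : ℕ, c n * a₁ n y) T₁ x :=
    hasDerivAt_tsum_aux c a₁ ha₁ hsum₁ hunif₁' x
  have hS₂d : HasDerivAt (fun y => ∑' n : ℕ, c n * a₂ n y) T₂ x :=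
    hasDerivAt_tsum_aux c a₂ ha₂ hsum₂ hunif₂' x
  -- basic HasSum facts
  have hbsum : HasSum (fun n : ℕ => c n * (deriv (a₁ n) x - a₁ n x - q x * a₂ n x))
      (T₁ - S₁ - q x * S₂) := by
    have h := (((hsum₁' x).hasSum.sub (hsum₁ x).hasSum).sub
      ((hsum₂ x).hasSum.mul_left (q x)))
    have heq : (fun n : ℕ => c n * (deriv (a₁ n) x - a₁ n x - q x * a₂ n x))
        = fun n : ℕ => ((-1 : ℂ) ^ n * z ^ n * deriv (a₁ n) x
            - (-1 : ℂ) ^ n * z ^ n * a₁ n x)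
            - q x * ((-1 : ℂ) ^ n * z ^ n * a₂ n x) := by
      funext n; simp only [hc]; ring
    rw [heq]
    exact h
  have hdsum : HasSum (fun n : ℕ => c n * (deriv (a₁ n) x + a₁ n x - q x * a₂ n x))
      (T₁ + S₁ - q x * S₂) := by
    have h := (((hsum₁' x).hasSum.add (hsum₁ x).hasSum).sub
      ((hsum₂ x).hasSum.mul_left (q x)))
    have heq : (fun n : ℕ => c n * (deriv (a₁ n) x + a₁ n x - q x * a₂ n x))
        = fun n : ℕ => ((-1 : ℂ) ^ n * z ^ n * deriv (a₁ n) x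
            + (-1 : ℂ) ^ n * z ^ n * a₁ n x)
            - q x * ((-1 : ℂ) ^ n * z ^ n * a₂ n x) := by
      funext n; simp only [hc]; ring
    rw [heq]
    exact h
  -- the main series identity from the recurrence
  have hmain : T₁ - S₁ - q x * S₂ = q x + (-z) * (T₁ + S₁ - q x * S₂) := by
    have h0 := Summable.tsum_eq_zero_add hbsum.summable
    rw [hbsum.tsum_eq] at h0
    rw [h0]
    congr 1
    · simp [hc, hrec₁ x]
    · have hshift : (fun n : ℕ =>
          c (n + 1) * (deriv (a₁ (n + 1)) x - a₁ (n + 1) x - q x * a₂ (n + 1) x))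
          = fun n : ℕ =>
            (-z) * (c n * (deriv (a₁ n) x + a₁ n x - q x * a₂ n x)) := by
        funext n
        rw [hrec₂ n x]
        simp only [hc]
        ring
      rw [hshift, (hdsum.mul_left (-z)).tsum_eq]
  -- T₂ = r x * S₁
  have hT₂eq : T₂ = r x * S₁ := by
    have h := ((hsum₁ x).hasSum.mul_left (r x))
    have heq : (fun n : ℕ => c n * deriv (a₂ n) x)
        = fun n : ℕ => r x * ((-1 : ℂ) ^ n * z ^ n * a₁ n x) := by
      funext n
      rw [hrec₀ n x]
      simp only [hc]
      ring
    rw [hT₂def, heq, h.tsum_eq]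
  -- substitute the definitions of ψ₁ and ψ₂
  have hψ₁' : ψ₁ = fun y : ℝ => Complex.exp (Complex.I * ρ * (y : ℂ))
      * ((z + 1) * ∑' n : ℕ, c n * a₁ n y) := funext hψ₁
  have hψ₂' : ψ₂ = fun y : ℝ => Complex.exp (Complex.I * ρ * (y : ℂ))
      * (1 + (z + 1) * ∑' n : ℕ, c n * a₂ n y) := funext hψ₂
  subst hψ₁' hψ₂'
  constructor
  · have hd := hexp.fun_mul (hS₁d.const_mul (z + 1))
    convert hd using 1
    · rfl
    simp only [hS₁def, hS₂def, ← hE]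
    linear_combination E * (∑' n : ℕ, c n * a₁ n x) * hkey + (-E) * hmain
  · have hd := hexp.fun_mul ((hasDerivAt_const x (1 : ℂ)).fun_add (hS₂d.const_mul (z + 1)))
    convert hd using 1
    · rfl
    simp only [hS₁def, hS₂def, ← hE]
    linear_combination (-E) * (z + 1) * hT₂eq
end
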